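/- If C_m and C_n (m, n ≥ 3) are cycles each with exactly one negative edge, and m, n > 3, then the balancing dimension of their Cartesian product C_m⁻ □ C_n⁻ equals 2. -/

import Mathlib

open Finset
open scoped Classical

/-- A signed graph: a simple graph together with a ±1 sign on each edge. -/
structure SGraph (V : Type*) where
  G : SimpleGraph V
  sign : V → V → ℤ
  sign_symm : ∀ u v, sign u v = sign v u
  sign_mem : ∀ u v, G.Adj u v → sign u v = 1 ∨ sign u v = -1

variable {V V1 V2 W : Type*}

/-- `ζ` is a positive k-switching function for the signed graph `S`. -/
def IsPosSwitching [Fintype V] (S : SGraph V) (k : ℕ) (ζ : V → Fin k → ℤ) : Prop :=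
  (∀ v i, ζ v i = -1 ∨ ζ v i = 0 ∨ ζ v i = 1) ∧
  (∀ u v, S.G.Adj u v → (∑ i, ζ u i * ζ v i) ≠ 0) ∧
  (∀ u v, S.G.Adj u v → S.sign u v * Int.sign (∑ i, ζ u i * ζ v i) = 1)

def HasPosSwitching [Fintype V] (S : SGraph V) (k : ℕ) : Prop :=
  ∃ ζ : V → Fin k → ℤ, IsPosSwitching S k ζ

/-- The balancing dimension: least `k ≥ 1` admitting a positive k-switching function. -/
noncomputable def bdim [Fintype V] (S : SGraph V) : ℕ :=
  sInf {k | 1 ≤ k ∧ HasPosSwitching S k}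

/-- A signed graph is balanced iff it can be switched to all-positive by a 1-switching. -/
def SGraph.Balanced [Fintype V] (S : SGraph V) : Prop := HasPosSwitching S 1

/-- The negation of a signed graph. -/
def SGraph.neg (S : SGraph V) : SGraph V where
  G := S.G
  sign := fun u v => - S.sign u v
  sign_symm := fun u v => by (try dsimp only); rw [S.sign_symm]
  sign_mem := fun u v h => by rcases S.sign_mem u v h with h1 | h1 <;> simp [h1]

def SGraph.Antibalanced [Fintype V] (S : SGraph V) : Prop := S.neg.Balanced

/-- Switching equivalence of signed graphs. -/
def SwitchEquiv (S1 S2 : SGraph V) : Prop :=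
  S1.G = S2.G ∧ ∃ η : V → ℤ, (∀ v, η v = 1 ∨ η v = -1) ∧
    ∀ u v, S1.G.Adj u v → S2.sign u v = η u * S1.sign u v * η v

/-- The Cartesian product of signed graphs. -/
noncomputable def cartProd (S1 : SGraph V1) (S2 : SGraph V2) : SGraph (V1 × V2) where
  G := S1.G □ S2.G
  sign := fun p q => if p.2 = q.2 then S1.sign p.1 q.1 else S2.sign p.2 q.2
  sign_symm := by
    intro u v
    (try dsimp only)
    rcases eq_or_ne u.2 v.2 with h | h
    · rw [if_pos h, if_pos h.symm, S1.sign_symm]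
    · rw [if_neg h, if_neg (Ne.symm h), S2.sign_symm]
  sign_mem := by
    intro u v h
    (try dsimp only)
    rcases (SimpleGraph.boxProd_adj.mp h) with ⟨h1, h2⟩ | ⟨h1, h2⟩
    · rw [if_pos h2]; exact S1.sign_mem _ _ h1
    · rw [if_neg h1.ne]; exact S2.sign_mem _ _ h1
/-- The HG-lexicographic product of signed graphs. -/
noncomputable def lexHG (S1 : SGraph V1) (S2 : SGraph V2) : SGraph (V1 × V2) where
  G := { Adj := fun p q => S1.G.Adj p.1 q.1 ∨ (p.1 = q.1 ∧ S2.G.Adj p.2 q.2)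
         symm := by
           refine ⟨?_⟩; rintro p q (h | ⟨h1, h2⟩)
           · exact Or.inl h.symm
           · exact Or.inr ⟨h1.symm, h2.symm⟩
         loopless := by
           refine ⟨?_⟩; rintro p (h | ⟨_, h⟩)
           · exact S1.G.irrefl h
           · exact S2.G.irrefl h }
  sign := fun p q => if p.1 = q.1 then S2.sign p.2 q.2 else S1.sign p.1 q.1
  sign_symm := by
    intro u v
    (try dsimp only)
    rcases eq_or_ne u.1 v.1 with h | h
    · rw [if_pos h, if_pos h.symm, S2.sign_symm]
    · rw [if_neg h, if_neg (Ne.symm h), S1.sign_symm]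
  sign_mem := by
    rintro p q (h | ⟨h1, h2⟩)
    · (try dsimp only); rw [if_neg h.ne]; exact S1.sign_mem _ _ h
    · (try dsimp only); rw [if_pos h1]; exact S2.sign_mem _ _ h2

/-- The BCD-lexicographic product of signed graphs. -/
noncomputable def lexBCD (S1 : SGraph V1) (S2 : SGraph V2) : SGraph (V1 × V2) where
  G := { Adj := fun p q => S1.G.Adj p.1 q.1 ∨ (p.1 = q.1 ∧ S2.G.Adj p.2 q.2)
         symm := by
           refine ⟨?_⟩; rintro p q (h | ⟨h1, h2⟩)
           · exact Or.inl h.symm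
           · exact Or.inr ⟨h1.symm, h2.symm⟩
         loopless := by
           refine ⟨?_⟩; rintro p (h | ⟨_, h⟩)
           · exact S1.G.irrefl h
           · exact S2.G.irrefl h }
  sign := fun p q =>
    if S2.G.Adj p.2 q.2 then
      (if S1.G.Adj p.1 q.1 then S1.sign p.1 q.1 * S2.sign p.2 q.2 else S2.sign p.2 q.2)
    else S1.sign p.1 q.1
  sign_symm := by
    intro u v
    (try dsimp only)
    rw [S1.G.adj_comm v.1 u.1, S2.G.adj_comm v.2 u.2, S1.sign_symm v.1 u.1,
      S2.sign_symm v.2 u.2]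
  sign_mem := by
    rintro p q (h | ⟨h1, h2⟩) <;> (try dsimp only)
    · by_cases h2 : S2.G.Adj p.2 q.2
      · rw [if_pos h2, if_pos h]
        rcases S1.sign_mem _ _ h with e1 | e1 <;> rcases S2.sign_mem _ _ h2 with e2 | e2 <;>
          simp [e1, e2]
      · rw [if_neg h2]; exact S1.sign_mem _ _ h
    · rw [if_pos h2, if_neg (h1 ▸ S1.G.irrefl)]
      exact S2.sign_mem _ _ h2

/-- The tensor product of signed graphs. -/
def tensorProd (S1 : SGraph V1) (S2 : SGraph V2) : SGraph (V1 × V2) where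
  G := { Adj := fun p q => S1.G.Adj p.1 q.1 ∧ S2.G.Adj p.2 q.2
         symm := ⟨fun p q ⟨h1, h2⟩ => ⟨h1.symm, h2.symm⟩⟩
         loopless := ⟨fun p ⟨h1, _⟩ => S1.G.irrefl h1⟩ }
  sign := fun p q => S1.sign p.1 q.1 * S2.sign p.2 q.2
  sign_symm := by
    intro u v
    (try dsimp only)
    rw [S1.sign_symm, S2.sign_symm]
  sign_mem := by
    rintro p q ⟨h1, h2⟩
    (try dsimp only)
    rcases S1.sign_mem _ _ h1 with e1 | e1 <;> rcases S2.sign_mem _ _ h2 with e2 | e2 <;>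
      simp [e1, e2]

/-- The strong product of signed graphs. -/
noncomputable def strongProd (S1 : SGraph V1) (S2 : SGraph V2) : SGraph (V1 × V2) where
  G := { Adj := fun p q => (S1.G.Adj p.1 q.1 ∧ p.2 = q.2) ∨ (p.1 = q.1 ∧ S2.G.Adj p.2 q.2) ∨
           (S1.G.Adj p.1 q.1 ∧ S2.G.Adj p.2 q.2)
         symm := by
           refine ⟨?_⟩; rintro p q (⟨h1, h2⟩ | ⟨h1, h2⟩ | ⟨h1, h2⟩)
           · exact Or.inl ⟨h1.symm, h2.symm⟩
           · exact Or.inr (Or.inl ⟨h1.symm, h2.symm⟩)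
           · exact Or.inr (Or.inr ⟨h1.symm, h2.symm⟩)
         loopless := by
           refine ⟨?_⟩; rintro p (⟨h1, _⟩ | ⟨_, h2⟩ | ⟨h1, _⟩)
           · exact S1.G.irrefl h1
           · exact S2.G.irrefl h2
           · exact S1.G.irrefl h1 }
  sign := fun p q =>
    if p.1 = q.1 then S2.sign p.2 q.2
    else if p.2 = q.2 then S1.sign p.1 q.1
    else S1.sign p.1 q.1 * S2.sign p.2 q.2
  sign_symm := by
    intro u v
    (try dsimp only)
    rcases eq_or_ne u.1 v.1 with h | h
    · rw [if_pos h, if_pos h.symm, S2.sign_symm]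
    · rw [if_neg h, if_neg (Ne.symm h)]
      rcases eq_or_ne u.2 v.2 with h' | h'
      · rw [if_pos h', if_pos h'.symm, S1.sign_symm]
      · rw [if_neg h', if_neg (Ne.symm h'), S1.sign_symm, S2.sign_symm]
  sign_mem := by
    rintro p q (⟨h1, h2⟩ | ⟨h1, h2⟩ | ⟨h1, h2⟩) <;> (try dsimp only)
    · rw [if_neg h1.ne, if_pos h2]; exact S1.sign_mem _ _ h1
    · rw [if_pos h1]; exact S2.sign_mem _ _ h2
    · rw [if_neg h1.ne, if_neg h2.ne]
      rcases S1.sign_mem _ _ h1 with e1 | e1 <;> rcases S2.sign_mem _ _ h2 with e2 | e2 <;>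
        simp [e1, e2]
/-- The cycle on `ZMod n` (vertices `0,1,…,n-1`) with the single negative edge `{0,1}`. -/
noncomputable def Cneg (n : ℕ) : SGraph (ZMod n) where
  G := { Adj := fun i j => i ≠ j ∧ (i - j = 1 ∨ j - i = 1)
         symm := ⟨fun i j ⟨h1, h2⟩ => ⟨h1.symm, h2.symm⟩⟩
         loopless := ⟨fun i ⟨h1, _⟩ => h1 rfl⟩ }
  sign := fun i j => if (i = 0 ∧ j = 1) ∨ (i = 1 ∧ j = 0) then -1 else 1
  sign_symm := by
    intro u v
    (try dsimp only)
    exact if_congr (by tauto) rfl rfl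
  sign_mem := by
    intro u v _
    (try dsimp only)
    by_cases h : (u = 0 ∧ v = 1) ∨ (u = 1 ∧ v = 0)
    · rw [if_pos h]; exact Or.inr rfl
    · rw [if_neg h]; exact Or.inl rfl

/-- The all-negative complete signed graph on `n` vertices. -/
def Kneg (n : ℕ) : SGraph (Fin n) where
  G := ⊤
  sign := fun _ _ => -1
  sign_symm := fun _ _ => rfl
  sign_mem := fun _ _ _ => Or.inr rfl

/-- The edgeless signed graph on `k` vertices. -/
def Nk (k : ℕ) : SGraph (Fin k) where
  G := ⊥
  sign := fun _ _ => 1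
  sign_symm := fun _ _ => rfl
  sign_mem := fun _ _ h => (h.elim)

/-- The lexicographic product of simple graphs. -/
def lexProdGraph (G : SimpleGraph V1) (H : SimpleGraph V2) : SimpleGraph (V1 × V2) where
  Adj p q := G.Adj p.1 q.1 ∨ (p.1 = q.1 ∧ H.Adj p.2 q.2)
  symm := by
    refine ⟨?_⟩; rintro p q (h | ⟨h1, h2⟩)
    · exact Or.inl h.symm
    · exact Or.inr ⟨h1.symm, h2.symm⟩
  loopless := by
    refine ⟨?_⟩; rintro p (h | ⟨_, h⟩)
    · exact G.irrefl h
    · exact H.irrefl h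

/-!
Each `C_m⁻` admits a labelling of its vertices by the eight compass directions, viewed as
vectors in `{-1, 0, 1}²`, such that the sign of every edge is the sign of the dot product of its
endpoint labels: label `0` east, `1` north-west, and let `2, 3, 4` turn back by `45°` each
(this needs `m ≥ 4`), so that the turn across the negative edge is obtuse and all others are acute.
Since the sign of the dot product is invariant under rotation, adding the labels of the two
coordinates gives such a labelling of `C_m⁻ □ C_n⁻`, which is a 2-switching. The product is not
balanced because it contains a copy of the unbalanced cycle `C_m⁻`.
-/

lemma bdim_eq_two [Fintype V] {S : SGraph V} (h2 : HasPosSwitching S 2) (h1 : ¬ S.Balanced) :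
    bdim S = 2 := by
  have mem2 : 2 ∈ {k | 1 ≤ k ∧ HasPosSwitching S k} := ⟨one_le_two, h2⟩
  have hmem : bdim S ∈ {k | 1 ≤ k ∧ HasPosSwitching S k} := Nat.sInf_mem ⟨2, mem2⟩
  have hne : bdim S ≠ 1 := fun h => h1 (show HasPosSwitching S 1 from h ▸ hmem.2)
  have hle : bdim S ≤ 2 := Nat.sInf_le mem2
  have hpos := hmem.1
  omega

lemma IsPosSwitching.sign_eq_of_one [Fintype V] {S : SGraph V} {ζ : V → Fin 1 → ℤ}
    (hζ : IsPosSwitching S 1 ζ) {u v : V} (huv : S.G.Adj u v) :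
    S.sign u v = (ζ u 0).sign * (ζ v 0).sign := by
  have h := hζ.2.2 u v huv
  rw [Fin.sum_univ_one, Int.sign_mul] at h
  rcases Int.eq_one_or_neg_one_of_mul_eq_one' h with ⟨hs, ht⟩ | ⟨hs, ht⟩ <;> rw [hs, ht]

lemma HasPosSwitching.of_cartProd_left [Fintype V1] [Fintype V2] {S1 : SGraph V1}
    {S2 : SGraph V2} {k : ℕ} (h : HasPosSwitching (cartProd S1 S2) k) (b : V2) :
    HasPosSwitching S1 k := by
  obtain ⟨ζ, hval, hnz, hsign⟩ := h
  have hadj {a a' : V1} (ha : S1.G.Adj a a') : (cartProd S1 S2).G.Adj (a, b) (a', b) :=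
    SimpleGraph.boxProd_adj.mpr (Or.inl ⟨ha, rfl⟩)
  refine ⟨fun a => ζ (a, b), fun a => hval (a, b), fun a a' ha => hnz _ _ (hadj ha),
    fun a a' ha => ?_⟩
  simpa [_root_.cartProd] using hsign _ _ (hadj ha)

section Compass

def compass : ZMod 8 → Fin 2 → ℤ :=
  ![![1, 0], ![1, 1], ![0, 1], ![-1, 1], ![-1, 0], ![-1, -1], ![0, -1], ![1, -1]]

def compassDot (a b : ZMod 8) : ℤ := ∑ i, compass a i * compass b i

lemma compass_mem : ∀ a i, compass a i = -1 ∨ compass a i = 0 ∨ compass a i = 1 := by decide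

lemma sign_compassDot_add :
    ∀ a b c, (compassDot (a + c) (b + c)).sign = (compassDot a b).sign := by decide

lemma compassDot_comm (a b : ZMod 8) : compassDot a b = compassDot b a := by
  simp only [compassDot, mul_comm]

def IsCompassLabelling (S : SGraph V) (f : V → ZMod 8) : Prop :=
  ∀ u v, S.G.Adj u v → S.sign u v = (compassDot (f u) (f v)).sign

lemma IsCompassLabelling.hasPosSwitching [Fintype V] {S : SGraph V} {f : V → ZMod 8}
    (hf : IsCompassLabelling S f) : HasPosSwitching S 2 := by
  have key (u v : V) (huv : S.G.Adj u v) :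
      compassDot (f u) (f v) ≠ 0 ∧ S.sign u v * (compassDot (f u) (f v)).sign = 1 := by
    rw [hf u v huv]
    rcases hf u v huv ▸ S.sign_mem u v huv with hs | hs <;>
      exact ⟨fun h0 => by simp [h0] at hs, by simp [hs]⟩
  exact ⟨fun v => compass (f v), fun v => compass_mem (f v), fun u v huv => (key u v huv).1,
    fun u v huv => (key u v huv).2⟩

lemma IsCompassLabelling.cartProd {S1 : SGraph V1} {S2 : SGraph V2} {f : V1 → ZMod 8}
    {g : V2 → ZMod 8} (hf : IsCompassLabelling S1 f) (hg : IsCompassLabelling S2 g) :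
    IsCompassLabelling (cartProd S1 S2) (fun p => f p.1 + g p.2) := by
  rintro ⟨a, b⟩ ⟨a', b'⟩ huv
  simp only [_root_.cartProd, SimpleGraph.boxProd_adj] at huv
  rcases huv with ⟨ha, rfl⟩ | ⟨hb, rfl⟩
  · change (if b = b then S1.sign a a' else S2.sign b b) =
      (compassDot (f a + g b) (f a' + g b)).sign
    rw [if_pos rfl, hf a a' ha, sign_compassDot_add]
  · change (if b = b' then S1.sign a a else S2.sign b b') =
      (compassDot (f a + g b) (f a + g b')).sign
    rw [if_neg hb.ne, hg b b' hb, add_comm (f a), add_comm (f a), sign_compassDot_add]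

end Compass

section Cneg

lemma natCast_ne_zero_of_lt {m k : ℕ} (hk : 0 < k) (hkm : k < m) : (k : ZMod m) ≠ 0 := by
  rw [Ne, ZMod.natCast_eq_zero_iff]
  exact fun h => absurd (Nat.le_of_dvd hk h) (by omega)

variable {m : ℕ}

lemma cneg_adj_succ (hm : 1 < m) (i : ZMod m) : (Cneg m).G.Adj i (i + 1) := by
  have h1 : (1 : ZMod m) ≠ 0 := by exact_mod_cast natCast_ne_zero_of_lt one_pos hm
  exact ⟨fun h => h1 (by linear_combination -h), Or.inr (by ring)⟩

lemma cneg_sign_succ (hm : 2 < m) (i : ZMod m) :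
    (Cneg m).sign i (i + 1) = if i = 0 then -1 else 1 := by
  have h2 : (2 : ZMod m) ≠ 0 := by exact_mod_cast natCast_ne_zero_of_lt two_pos hm
  change (if (i = 0 ∧ i + 1 = 1) ∨ (i = 1 ∧ i + 1 = 0) then (-1 : ℤ) else 1) = _
  congr 1
  grind

lemma prod_cneg_sign_succ [NeZero m] (hm : 2 < m) :
    ∏ i : ZMod m, (Cneg m).sign i (i + 1) = -1 := by
  simp only [cneg_sign_succ hm, Finset.prod_ite_eq', Finset.mem_univ, if_true]

def cnegCompass (m : ℕ) (i : ZMod m) : ZMod 8 :=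
  if i = 1 then 3 else if i = 2 then 2 else if i = 3 then 1 else 0

lemma isCompassLabelling_cneg (hm : 3 < m) : IsCompassLabelling (Cneg m) (cnegCompass m) := by
  have h1 : (1 : ZMod m) ≠ 0 := by exact_mod_cast natCast_ne_zero_of_lt one_pos (by omega)
  have h2 : (2 : ZMod m) ≠ 0 := by exact_mod_cast natCast_ne_zero_of_lt two_pos (by omega)
  have h3 : (3 : ZMod m) ≠ 0 := by exact_mod_cast natCast_ne_zero_of_lt three_pos hm
  have succ (i : ZMod m) :
      (Cneg m).sign i (i + 1) = (compassDot (cnegCompass m i) (cnegCompass m (i + 1))).sign := by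
    rw [cneg_sign_succ (by omega)]
    unfold cnegCompass
    -- consistent branches are checks in `ZMod 8`; the others contradict `1, 2, 3 ≠ 0` in `ZMod m`
    split_ifs <;> first | decide | (exfalso; grind)
  rintro i j ⟨-, hij | hij⟩
  · obtain rfl : i = j + 1 := by linear_combination hij
    rw [(Cneg m).sign_symm, compassDot_comm, succ]
  · obtain rfl : j = i + 1 := by linear_combination hij
    exact succ i

lemma cneg_not_balanced [NeZero m] (hm : 2 < m) : ¬ (Cneg m).Balanced := by
  rintro ⟨ζ, hζ⟩
  set s : ZMod m → ℤ := fun i => (ζ i 0).sign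
  have hprod : ∏ i : ZMod m, (Cneg m).sign i (i + 1) = (∏ i, s i) ^ 2 := by
    rw [Finset.prod_congr rfl fun i _ => hζ.sign_eq_of_one (cneg_adj_succ (by omega) i),
      Finset.prod_mul_distrib, sq,
      Fintype.prod_equiv (Equiv.addRight 1) (fun i => s (i + 1)) s fun _ => rfl]
  rw [prod_cneg_sign_succ hm] at hprod
  nlinarith [sq_nonneg (∏ i, s i)]

end Cneg

theorem stmt3 (m n : ℕ) [NeZero m] [NeZero n] (hm : 3 < m) (hn : 3 < n) :
    bdim (cartProd (Cneg m) (Cneg n)) = 2 :=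
  bdim_eq_two ((isCompassLabelling_cneg hm).cartProd (isCompassLabelling_cneg hn)).hasPosSwitching
    fun h => cneg_not_balanced (by omega) (h.of_cartProd_left 0)
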